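/- arXiv:2508.15692 — 2 statements merged into one kernel-verified Lean document; each statement's English description precedes it below -/
import Mathlib

section
/- Let T = G ∧ H with supp(T) = supp(G) ⊕ supp(H) and supp(G) ≠ {0}. Then the compliers of G with respect to T are exactly the units i with H(X_i^H | 0) = 1, the nevertakers of G with respect to T are exactly those with H(X_i^H | 0) = 0, and every unit is either a complier or a nevertaker of G with respect to T. -/
open Filter
open scoped Topology

namespace MRD

abbrev Score (K : ℕ) := Fin K → ℝ

/-- The k-th standard basis vector of `ℝ^K`. -/
def stdBasis {K : ℕ} (k : Fin K) : Score K := Pi.single k 1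

/-- `T` is a cutoff rule: `T x c = g (1[x_1 > c_1], ..., 1[x_K > c_K])` for a Boolean `g`. -/
def IsCutoffRule {K : ℕ} (T : Score K → Score K → Bool) : Prop :=
  ∃ g : (Fin K → Bool) → Bool, ∀ x c, T x c = g fun k => decide (c k < x k)

/-- Support directions `S(T)`. -/
def suppDirs {K : ℕ} (T : Score K → Score K → Bool) : Set (Fin K) :=
  {k | ∃ c : Score K, ∃ l : ℝ, T 0 (c + l • stdBasis k) ≠ T 0 c}

/-- `supp(T)`: the span of the standard basis vectors in the support directions. -/
def supp {K : ℕ} (T : Score K → Score K → Bool) : Submodule ℝ (Score K) :=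
  Submodule.span ℝ (stdBasis '' suppDirs T)

/-- `N^T`: scores that never affect `T`. -/
def nspace {K : ℕ} (T : Score K → Score K → Bool) : Set (Score K) :=
  {X | ∀ c, T X c = T 0 c}

/-- The component `X^T` of `X` in `supp(T)` (coordinatewise indicator projection). -/
noncomputable def projT {K : ℕ} (T : Score K → Score K → Bool) (X : Score K) : Score K :=
  (suppDirs T).indicator X

/-- The component `X^{⊥T}` of `X` in `N^T`. -/
noncomputable def perpT {K : ℕ} (T : Score K → Score K → Bool) (X : Score K) : Score K :=
  X - projT T X

/-- Nevertaker of `T` w.r.t. decision rule `D`, for a unit with score `X`. -/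
def Nevertaker {K : ℕ} (T : Score K → Score K → Bool) (D : Score K → Bool)
    (X : Score K) : Prop :=
  ∀ c ∈ supp T, D (perpT T X - c) = false

/-- Alwaystaker of `T` w.r.t. `D`. -/
def Alwaystaker {K : ℕ} (T : Score K → Score K → Bool) (D : Score K → Bool)
    (X : Score K) : Prop :=
  ∀ c ∈ supp T, D (perpT T X - c) = true

/-- Complier of `T` w.r.t. `D`. -/
def Complier {K : ℕ} (T : Score K → Score K → Bool) (D : Score K → Bool)
    (X : Score K) : Prop :=
  ∀ c ∈ supp T, T 0 c = D (perpT T X - c)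

/-- Defier of `T` w.r.t. `D`. -/
def Defier {K : ℕ} (T : Score K → Score K → Bool) (D : Score K → Bool)
    (X : Score K) : Prop :=
  ∀ c ∈ supp T, T 0 c ≠ D (perpT T X - c)

/-- Indecisive: none of the four categories. -/
def Indecisive {K : ℕ} (T : Score K → Score K → Bool) (D : Score K → Bool)
    (X : Score K) : Prop :=
  ¬ Nevertaker T D X ∧ ¬ Alwaystaker T D X ∧ ¬ Complier T D X ∧ ¬ Defier T D X

/-- Nevertaker, cutoff-rule form: `D(X | c) = 0` for all `c ∈ supp(T)`. -/
def NevertakerC {K : ℕ} (T D : Score K → Score K → Bool) (X : Score K) : Prop :=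
  ∀ c ∈ supp T, D X c = false

/-- Alwaystaker, cutoff-rule form. -/
def AlwaystakerC {K : ℕ} (T D : Score K → Score K → Bool) (X : Score K) : Prop :=
  ∀ c ∈ supp T, D X c = true

/-- Complier, cutoff-rule form: `T(X | c) = D(X | c)` for all `c ∈ supp(T)`. -/
def ComplierC {K : ℕ} (T D : Score K → Score K → Bool) (X : Score K) : Prop :=
  ∀ c ∈ supp T, T X c = D X c

/-- Defier, cutoff-rule form. -/
def DefierC {K : ℕ} (T D : Score K → Score K → Bool) (X : Score K) : Prop :=
  ∀ c ∈ supp T, T X c ≠ D X c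

section Aux

variable {K : ℕ}

/-- Realize a boolean sign pattern by a real vector. -/
def cOf (b : Fin K → Bool) : Score K := fun k => if b k then -1 else 1

lemma cutoff_translate {G : Score K → Score K → Bool} (hG : IsCutoffRule G)
    (x c : Score K) : G x c = G 0 (c - x) := by
  obtain ⟨g, hg⟩ := hG
  rw [hg, hg]
  congr 1
  funext k
  simp [sub_neg]

lemma G0_cOf {G : Score K → Score K → Bool} {g : (Fin K → Bool) → Bool}
    (hg : ∀ x c, G x c = g fun k => decide (c k < x k)) (b : Fin K → Bool) :
    G 0 (cOf b) = g b := by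
  rw [hg]
  congr 1
  funext j
  by_cases h : b j <;> simp [cOf, h]

lemma g_update {G : Score K → Score K → Bool} {g : (Fin K → Bool) → Bool}
    (hg : ∀ x c, G x c = g fun k => decide (c k < x k))
    {k : Fin K} (hk : k ∉ suppDirs G) (b : Fin K → Bool) (v : Bool) :
    g (Function.update b k v) = g b := by
  have key : ∀ (c : Score K) (l : ℝ), G 0 (c + l • stdBasis k) = G 0 c := by
    intro c l
    by_contra h
    exact hk ⟨c, l, h⟩
  have hup : cOf (Function.update b k v)
      = cOf b + ((if v then (-1:ℝ) else 1) - (if b k then -1 else 1)) • stdBasis k := by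
    funext j
    by_cases hj : j = k
    · subst hj
      simp [cOf, Function.update_self, stdBasis, Pi.single_eq_same]
    · simp [cOf, Function.update_of_ne hj, stdBasis, Pi.single_eq_of_ne hj]
  rw [← G0_cOf hg, ← G0_cOf hg, hup, key]

lemma g_agree {G : Score K → Score K → Bool} {g : (Fin K → Bool) → Bool}
    (hg : ∀ x c, G x c = g fun k => decide (c k < x k))
    (b b' : Fin K → Bool) (h : ∀ k ∈ suppDirs G, b k = b' k) : g b = g b' := by
  classical
  have main : ∀ s : Finset (Fin K), ∀ b b' : Fin K → Bool,
      (∀ k, k ∉ s → b k = b' k) → (∀ k ∈ s, k ∉ suppDirs G) → g b = g b' := by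
    intro s
    induction s using Finset.induction with
    | empty =>
      intro b b' h _
      congr 1
      funext k
      exact h k (Finset.notMem_empty k)
    | @insert k s hks ih =>
      intro b b' hout hin
      have hk : k ∉ suppDirs G := hin _ (Finset.mem_insert_self _ _)
      rw [← g_update hg hk b (b' k)]
      apply ih
      · intro j hj
        by_cases hjk : j = k
        · subst hjk; simp
        · rw [Function.update_of_ne hjk]
          exact hout j (by simp [hjk, hj])
      · intro j hj
        exact hin j (Finset.mem_insert_of_mem hj)
  apply main (Finset.univ.filter (fun k => k ∉ suppDirs G))
  · intro k hk
    simp only [Finset.mem_filter, Finset.mem_univ, true_and, not_not] at hk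
    exact h k hk
  · intro k hk
    simp only [Finset.mem_filter, Finset.mem_univ, true_and] at hk
    exact hk

lemma G0_eq_of_agree {G : Score K → Score K → Bool} (hG : IsCutoffRule G)
    (c c' : Score K) (h : ∀ k ∈ suppDirs G, c k = c' k) : G 0 c = G 0 c' := by
  obtain ⟨g, hg⟩ := hG
  rw [hg, hg]
  exact g_agree hg _ _ (fun k hk => by simp [h k hk])

lemma supp_apply_eq_zero {G : Score K → Score K → Bool} {c : Score K}
    (hc : c ∈ supp G) {k : Fin K} (hk : k ∉ suppDirs G) : c k = 0 := by
  have hle : supp G ≤ LinearMap.ker (LinearMap.proj k : (Score K) →ₗ[ℝ] ℝ) := by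
    rw [supp, Submodule.span_le]
    rintro x ⟨j, hj, rfl⟩
    have hjk : j ≠ k := fun h => hk (h ▸ hj)
    simp [LinearMap.mem_ker, stdBasis, Pi.single_eq_of_ne hjk.symm]
  simpa using hle hc

lemma mem_supp_of_support {G : Score K → Score K → Bool} (v : Score K)
    (hv : ∀ k, k ∉ suppDirs G → v k = 0) : v ∈ supp G := by
  classical
  have hrep : v = ∑ k : Fin K, v k • stdBasis k := by
    funext j
    simp [stdBasis, Finset.sum_apply, Pi.single_apply]
  rw [hrep]
  apply Submodule.sum_mem
  intro k _
  by_cases hk : k ∈ suppDirs G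
  · exact Submodule.smul_mem _ _ (Submodule.subset_span ⟨k, hk, rfl⟩)
  · rw [hv k hk]
    simp

lemma suppDirs_nonempty {G : Score K → Score K → Bool} (h : supp G ≠ ⊥) :
    (suppDirs G).Nonempty := by
  rw [Set.nonempty_iff_ne_empty]
  intro he
  exact h (by rw [supp, he]; simp)

lemma exists_true_on_supp {G : Score K → Score K → Bool} (hG : IsCutoffRule G)
    (hGnd : supp G ≠ ⊥) : ∃ c ∈ supp G, G 0 c = true := by
  obtain ⟨k, c0, l, hne⟩ := suppDirs_nonempty hGnd
  have : ∃ c1 : Score K, G 0 c1 = true := by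
    cases h0 : G 0 c0 with
    | true => exact ⟨c0, h0⟩
    | false =>
      refine ⟨c0 + l • stdBasis k, ?_⟩
      cases h1 : G 0 (c0 + l • stdBasis k) with
      | true => rfl
      | false => exact absurd (h1.trans h0.symm) hne
  obtain ⟨c1, hc1⟩ := this
  classical
  refine ⟨(suppDirs G).indicator c1, mem_supp_of_support _
    (fun k hk => Set.indicator_of_notMem hk _), ?_⟩
  rw [G0_eq_of_agree hG _ c1 (fun k hk => Set.indicator_of_mem hk _), hc1]

end Aux

/-- for `T = G ∧ H` with `supp(T) = supp(G) ⊕ supp(H)`, `supp(G) ≠ {0}`,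
the compliers of `G` w.r.t. `T` are exactly the units with `H(X^H | 0) = 1`, the
nevertakers exactly those with `H(X^H | 0) = 0`, and every unit is one of the two. -/
theorem stmt9 {K : ℕ} (T G H : Score K → Score K → Bool)
    (hG : IsCutoffRule G) (hH : IsCutoffRule H)
    (hTdef : ∀ x c, T x c = (G x c && H x c))
    (hdisj : Disjoint (supp G) (supp H))
    (hsum : supp T = supp G ⊔ supp H)
    (hGnd : supp G ≠ ⊥) (X : Score K) :
    (Complier G (fun y => T y 0) X ↔ H (projT H X) 0 = true) ∧
    (Nevertaker G (fun y => T y 0) X ↔ H (projT H X) 0 = false) ∧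
    (Complier G (fun y => T y 0) X ∨ Nevertaker G (fun y => T y 0) X) := by
  classical
  have hTcut : IsCutoffRule T := by
    obtain ⟨g1, hg1⟩ := hG
    obtain ⟨g2, hg2⟩ := hH
    exact ⟨fun b => g1 b && g2 b, fun x c => by rw [hTdef, hg1, hg2]⟩
  have hsdisj : ∀ k, k ∈ suppDirs H → k ∉ suppDirs G := by
    intro k hkH hkG
    have h1 : stdBasis k ∈ supp G := Submodule.subset_span ⟨k, hkG, rfl⟩
    have h2 : stdBasis k ∈ supp H := Submodule.subset_span ⟨k, hkH, rfl⟩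
    have h0 := Submodule.disjoint_def.mp hdisj _ h1 h2
    have : stdBasis (K := K) k k = 0 := by rw [h0]; rfl
    simp [stdBasis] at this
  have hpzero : ∀ k ∈ suppDirs G, perpT G X k = 0 := by
    intro k hk
    simp [perpT, projT, Set.indicator_of_mem hk]
  have hpX : ∀ k, k ∉ suppDirs G → perpT G X k = X k := by
    intro k hk
    simp [perpT, projT, Set.indicator_of_notMem hk]
  -- key computation
  have key : ∀ c ∈ supp G, T (perpT G X - c) 0 = (G 0 c && H (projT H X) 0) := by
    intro c hc
    rw [hTdef]
    have hGpart : G (perpT G X - c) 0 = G 0 c := by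
      rw [cutoff_translate hG]
      apply G0_eq_of_agree hG
      intro k hk
      simp [hpzero k hk]
    have hHpart : H (perpT G X - c) 0 = H (projT H X) 0 := by
      rw [cutoff_translate hH (perpT G X - c) 0,
        cutoff_translate hH (projT H X) 0]
      apply G0_eq_of_agree hH
      intro k hk
      have hkG : k ∉ suppDirs G := hsdisj k hk
      simp [hpX k hkG, supp_apply_eq_zero hc hkG, projT, Set.indicator_of_mem hk]
    rw [hGpart, hHpart]
  obtain ⟨c₁, hc₁, htrue⟩ := exists_true_on_supp hG hGnd
  cases h0 : H (projT H X) 0 with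
  | true =>
    have hcomp : Complier G (fun y => T y 0) X := by
      intro c hc
      show G 0 c = T (perpT G X - c) 0
      rw [key c hc, h0, Bool.and_true]
    have hnotnev : ¬ Nevertaker G (fun y => T y 0) X := by
      intro hnev
      have h1 := hnev c₁ hc₁
      have h2 := key c₁ hc₁
      rw [h0, htrue] at h2
      simp only [Bool.true_and] at h2
      change T (perpT G X - c₁) 0 = false at h1
      rw [h2] at h1
      exact absurd h1 (by simp)
    exact ⟨⟨fun _ => rfl, fun _ => hcomp⟩,
      ⟨fun h => absurd h hnotnev, fun h => by simp at h⟩, Or.inl hcomp⟩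
  | false =>
    have hnev : Nevertaker G (fun y => T y 0) X := by
      intro c hc
      show T (perpT G X - c) 0 = false
      rw [key c hc, h0, Bool.and_false]
    have hnotcomp : ¬ Complier G (fun y => T y 0) X := by
      intro hcompl
      have h1 := hcompl c₁ hc₁
      have h2 := key c₁ hc₁
      rw [h0, htrue] at h2
      simp only [Bool.and_false] at h2
      change G 0 c₁ = T (perpT G X - c₁) 0 at h1
      rw [h2, htrue] at h1
      exact absurd h1 (by simp)
    exact ⟨⟨fun h => absurd h hnotcomp, fun h => by simp at h⟩,
      ⟨fun _ => rfl, fun _ => hnev⟩, Or.inr hnev⟩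

end MRD
end

section
/- Let T = G ∨ H with supp(T) = supp(G) ⊕ supp(H) and supp(G) ≠ {0}. Then the compliers of G with respect to T are exactly the units i with H(X_i^H | 0) = 0, the alwaystakers of G with respect to T are exactly those with H(X_i^H | 0) = 1, and every unit is either a complier or an alwaystaker of G with respect to T. -/
open Filter
open scoped Topology

namespace MRD

/-!
A cutoff rule only looks at the comparisons `c k < x k` in its support directions. The
directions of `G` and `H` are disjoint, so at `c ∈ supp(G)` the score `X^{⊥G} - c` compares
with `0` like `-c` in the directions of `G` and like `X^H` in those of `H`; hence
`T(X^{⊥G} - c | 0) = G(0 | c) ∨ H(X^H | 0)`. If `H(X^H | 0) = 0` this is `G(0 | c)`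
(complier), otherwise it is `1` (alwaystaker), and the two cases exclude each other because
`G(0 | c) = 0` for some `c ∈ supp(G)` as soon as `supp(G) ≠ {0}`.
-/

lemma apply_eq_apply_of_update_eq {ι α β : Type*} [Fintype ι] [DecidableEq ι]
    {f : (ι → α) → β} {S : Set ι} (hf : ∀ k ∉ S, ∀ b v, f (Function.update b k v) = f b)
    {b b' : ι → α} (h : ∀ k ∈ S, b k = b' k) : f b = f b' := by
  suffices ∀ t : Finset ι, ∀ b, (∀ k ∉ t, b k = b' k) → (∀ k ∈ S, b k = b' k) → f b = f b' from
    this Finset.univ b (by simp) h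
  intro t
  induction t using Finset.induction with
  | empty =>
    intro b hb _
    exact congrArg f (funext fun k => hb k (Finset.notMem_empty k))
  | insert j t _ ih =>
    intro b hb hS
    have hupdate : f (Function.update b j (b' j)) = f b := by
      by_cases hj : j ∈ S
      · rw [← hS j hj, Function.update_eq_self]
      · exact hf j hj b _
    have hagree : ∀ k, (k ≠ j → b k = b' k) → Function.update b j (b' j) k = b' k := by
      intro k hk
      by_cases hkj : k = j
      · subst hkj; simp
      · rw [Function.update_of_ne hkj, hk hkj]
    rw [← hupdate]
    exact ih _ (fun k hk => hagree k fun hkj => hb k (by simp [hkj, hk]))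
      fun k hk => hagree k fun _ => hS k hk

variable {K : ℕ} {T G H : Score K → Score K → Bool}

lemma apply_zero_eq_of_notMem_suppDirs {k : Fin K} (hk : k ∉ suppDirs T) {c c' : Score K}
    (h : ∀ j ≠ k, c j = c' j) : T 0 c = T 0 c' := by
  have hc' : c' = c + (c' k - c k) • stdBasis k := by
    funext j
    by_cases hj : j = k
    · subst hj; simp [stdBasis]
    · simp [stdBasis, hj, h j hj]
  simp only [suppDirs, Set.mem_ofPred_eq, not_exists, not_not] at hk
  rw [hc', hk]

lemma mem_supp_iff {c : Score K} : c ∈ supp T ↔ ∀ k ∉ suppDirs T, c k = 0 := by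
  constructor
  · intro hc
    have hle : supp T ≤ ⨅ k ∈ (suppDirs T)ᶜ, LinearMap.ker (LinearMap.proj k) := by
      refine Submodule.span_le.mpr ?_
      rintro _ ⟨k, hk, rfl⟩
      simp only [SetLike.mem_coe, Submodule.mem_iInf, LinearMap.mem_ker, LinearMap.coe_proj,
        Function.eval, Set.mem_compl_iff]
      intro j hj
      simp [stdBasis, show j ≠ k by rintro rfl; exact hj hk]
    simpa using hle hc
  · intro h
    rw [pi_eq_sum_univ' c]
    refine Submodule.sum_mem _ fun k _ => ?_
    by_cases hk : k ∈ suppDirs T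
    · exact Submodule.smul_mem _ _ (Submodule.subset_span ⟨k, hk, rfl⟩)
    · simp [h k hk]

lemma indicator_suppDirs_mem_supp (c : Score K) : (suppDirs T).indicator c ∈ supp T :=
  mem_supp_iff.mpr fun _ hk => Set.indicator_of_notMem hk c

lemma disjoint_suppDirs (hdisj : Disjoint (supp G) (supp H)) :
    Disjoint (suppDirs G) (suppDirs H) := by
  refine Set.disjoint_left.mpr fun k hkG hkH => ?_
  have hzero : stdBasis k = 0 :=
    Submodule.disjoint_def.mp hdisj _ (Submodule.subset_span ⟨k, hkG, rfl⟩)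
      (Submodule.subset_span ⟨k, hkH, rfl⟩)
  simpa [stdBasis] using congrFun hzero k

namespace IsCutoffRule

lemma apply_update_eq {g : (Fin K → Bool) → Bool}
    (hg : ∀ x c, T x c = g fun k => decide (c k < x k)) {k : Fin K} (hk : k ∉ suppDirs T)
    (b : Fin K → Bool) (v : Bool) : g (Function.update b k v) = g b := by
  -- every pattern `b` is realised by the score `0` against the cutoff `±1`
  have hrealize : ∀ b, g b = T 0 fun j => if b j then -1 else 1 := by
    intro b
    rw [hg]
    congr 1
    funext j
    cases b j <;> norm_num
  rw [hrealize, hrealize]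
  exact apply_zero_eq_of_notMem_suppDirs hk fun j hj => by simp [Function.update_of_ne hj]

lemma apply_eq_apply (hT : IsCutoffRule T) {x c x' c' : Score K}
    (h : ∀ k ∈ suppDirs T, (c k < x k ↔ c' k < x' k)) : T x c = T x' c' := by
  obtain ⟨g, hg⟩ := hT
  rw [hg, hg]
  exact apply_eq_apply_of_update_eq (fun _ hk => apply_update_eq hg hk) fun k hk =>
    decide_eq_decide.mpr (h k hk)

lemma exists_mem_supp_apply_zero_eq_false (hT : IsCutoffRule T) (hne : supp T ≠ ⊥) :
    ∃ c ∈ supp T, T 0 c = false := by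
  obtain ⟨k, c, l, hkcl⟩ : (suppDirs T).Nonempty := by
    rw [Set.nonempty_iff_ne_empty]
    rintro hempty
    simp [supp, hempty] at hne
  obtain ⟨c₀, hc₀⟩ : ∃ c₀, T 0 c₀ = false := by
    cases h : T 0 c
    · exact ⟨c, h⟩
    · exact ⟨c + l • stdBasis k, by simpa [h] using hkcl⟩
  refine ⟨_, indicator_suppDirs_mem_supp c₀, ?_⟩
  rw [← hc₀]
  exact hT.apply_eq_apply fun k hk => by rw [Set.indicator_of_mem hk]

lemma apply_perpT_sub_zero (hG : IsCutoffRule G) (X c : Score K) :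
    G (perpT G X - c) 0 = G 0 c :=
  hG.apply_eq_apply fun k hk => by
    simp [perpT, projT, Set.indicator_of_mem hk]

lemma apply_perpT_sub_zero_of_disjoint (hH : IsCutoffRule H)
    (hdisj : Disjoint (suppDirs G) (suppDirs H)) (X : Score K) {c : Score K} (hc : c ∈ supp G) :
    H (perpT G X - c) 0 = H (projT H X) 0 :=
  hH.apply_eq_apply fun k hk => by
    have hkG : k ∉ suppDirs G := Set.disjoint_right.mp hdisj hk
    simp [perpT, projT, Set.indicator_of_mem hk, Set.indicator_of_notMem hkG,
      mem_supp_iff.mp hc k hkG]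

end IsCutoffRule

theorem stmt10_general {K : ℕ} (T G H : Score K → Score K → Bool)
    (hG : IsCutoffRule G) (hH : IsCutoffRule H)
    (hTdef : ∀ x c, T x c = (G x c || H x c))
    (hdisj : Disjoint (supp G) (supp H))
    (hGnd : supp G ≠ ⊥) (X : Score K) :
    (Complier G (fun y => T y 0) X ↔ H (projT H X) 0 = false) ∧
    (Alwaystaker G (fun y => T y 0) X ↔ H (projT H X) 0 = true) ∧
    (Complier G (fun y => T y 0) X ∨ Alwaystaker G (fun y => T y 0) X) := by
  have hT : ∀ c ∈ supp G, T (perpT G X - c) 0 = (G 0 c || H (projT H X) 0) := fun c hc => by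
    rw [hTdef, hG.apply_perpT_sub_zero,
      hH.apply_perpT_sub_zero_of_disjoint (disjoint_suppDirs hdisj) X hc]
  have hComplier :
      Complier G (fun y => T y 0) X ↔ ∀ c ∈ supp G, G 0 c = (G 0 c || H (projT H X) 0) :=
    forall₂_congr fun c hc => by rw [← hT c hc]
  have hAlwaystaker :
      Alwaystaker G (fun y => T y 0) X ↔ ∀ c ∈ supp G, (G 0 c || H (projT H X) 0) = true :=
    forall₂_congr fun c hc => by rw [← hT c hc]
  obtain ⟨c₀, hc₀, hGc₀⟩ := hG.exists_mem_supp_apply_zero_eq_false hGnd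
  rw [hComplier, hAlwaystaker]
  cases H (projT H X) 0 <;> simpa using ⟨c₀, hc₀, hGc₀⟩

/-- for `T = G ∨ H` with `supp(T) = supp(G) ⊕ supp(H)`, `supp(G) ≠ {0}`,
the compliers of `G` w.r.t. `T` are exactly the units with `H(X^H | 0) = 0`, the
alwaystakers exactly those with `H(X^H | 0) = 1`, and every unit is one of the two. -/
theorem stmt10 {K : ℕ} (T G H : Score K → Score K → Bool)
    (hG : IsCutoffRule G) (hH : IsCutoffRule H)
    (hTdef : ∀ x c, T x c = (G x c || H x c))
    (hdisj : Disjoint (supp G) (supp H))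
    (hsum : supp T = supp G ⊔ supp H)
    (hGnd : supp G ≠ ⊥) (X : Score K) :
    (Complier G (fun y => T y 0) X ↔ H (projT H X) 0 = false) ∧
    (Alwaystaker G (fun y => T y 0) X ↔ H (projT H X) 0 = true) ∧
    (Complier G (fun y => T y 0) X ∨ Alwaystaker G (fun y => T y 0) X) :=
  stmt10_general T G H hG hH hTdef hdisj hGnd X

end MRD
end
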